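/- arXiv:0711.3588 — 2 statements merged into one kernel-verified Lean document; each statement's English description precedes it below -/
import Mathlib

section
/- Let G = GL(2, F) act on pairs of 2×2 matrices H = F^{2×2} ⊕ F^{2×2} by simultaneous conjugation, where F is an infinite field of characteristic not two. Then the five invariants tr(X₁), tr(X₂), tr(X₁X₂), det(X₁), det(X₂) are algebraically independent, i.e., the polynomial ring generated by them inside F[H] is a polynomial ring in five variables. -/
open MvPolynomial

/-! It suffices to specialize the generic matrices to one pair of matrices, over some
`F`-algebra, whose five invariants are algebraically independent. Adjoin to `F[y₀, …, y₄]` a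
root `t` of a monic quadratic; over the resulting ring the companion matrix of
`T² - y₀ T + y₃`, paired with a suitable matrix built from `t`, has invariants exactly
`y₀, …, y₄`. -/

/-- The generic 2×2 matrices `X₁, X₂` over the coordinate ring
`F[H] = F[x_{ij}(k) | 1 ≤ i,j ≤ 2, k = 1,2]` of pairs of 2×2 matrices. -/
noncomputable def genMat (F : Type*) [CommRing F] (k : Fin 2) :
    Matrix (Fin 2) (Fin 2) (MvPolynomial (Fin 2 × Fin 2 × Fin 2) F) :=
  Matrix.of fun i j => MvPolynomial.X (k, i, j)

section Invariants

variable {A B : Type*} [CommRing A] [CommRing B]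

def pairInvariants (M : Fin 2 → Matrix (Fin 2) (Fin 2) A) : Fin 5 → A :=
  ![(M 0).trace, (M 1).trace, (M 0 * M 1).trace, (M 0).det, (M 1).det]

theorem pairInvariants_map {R : Type*} [CommRing R] [Algebra R A] [Algebra R B] (f : A →ₐ[R] B)
    (M : Fin 2 → Matrix (Fin 2) (Fin 2) A) :
    pairInvariants (fun k => (M k).map f) = f ∘ pairInvariants M := by
  funext i
  fin_cases i <;>
    simp [pairInvariants, AddMonoidHom.map_trace, Matrix.map_mul, AlgHom.map_det]

/-- `M₀` is the companion matrix with trace `y₀` and determinant `y₃`; `M₁` is the matrix of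
trace `y₁` and determinant `y₄` with first row `(t, 1)`, and then `tr (M₀ M₁) = y₂` is exactly
the quadratic equation for `t`. -/
def quadraticPair (y : Fin 5 → A) (t : A) : Fin 2 → Matrix (Fin 2) (Fin 2) A :=
  ![!![0, 1; -y 3, y 0], !![t, 1; y 1 * t - t ^ 2 - y 4, y 1 - t]]

theorem pairInvariants_quadraticPair (y : Fin 5 → A) (t : A)
    (ht : t ^ 2 = (y 1 - y 0) * t + (y 0 * y 1 - y 3 - y 4 - y 2)) :
    pairInvariants (quadraticPair y t) = y := by
  funext i
  fin_cases i
  · simp [pairInvariants, quadraticPair]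
  · simp [pairInvariants, quadraticPair]
  · change (!![0, 1; -y 3, y 0] * !![t, 1; y 1 * t - t ^ 2 - y 4, y 1 - t]).trace = y 2
    rw [Matrix.mul_fin_two, Matrix.trace_fin_two_of]
    linear_combination -ht
  · simp [pairInvariants, quadraticPair]
  · change (!![t, 1; y 1 * t - t ^ 2 - y 4, y 1 - t]).det = y 4
    rw [Matrix.det_fin_two_of]
    ring

end Invariants

theorem AdjoinRoot.algebraicIndependent_of_X {R σ : Type*} [CommRing R] [IsDomain R]
    {p : Polynomial (MvPolynomial σ R)} (hp : p.degree ≠ 0) :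
    AlgebraicIndependent R fun i => AdjoinRoot.of p (X i) :=
  (algebraicIndependent_X σ R).map'
    (f := IsScalarTower.toAlgHom R (MvPolynomial σ R) (AdjoinRoot p))
    (AdjoinRoot.of.injective_of_degree_ne_zero hp)

theorem algebraicIndependent_pairInvariants_genMat_of_specialization {F A : Type*}
    [CommRing F] [CommRing A] [Algebra F A] (M : Fin 2 → Matrix (Fin 2) (Fin 2) A)
    (hM : AlgebraicIndependent F (pairInvariants M)) :
    AlgebraicIndependent F (pairInvariants (genMat F)) := by
  let w : Fin 2 × Fin 2 × Fin 2 → A := fun p => M p.1 p.2.1 p.2.2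
  have hspec : (fun k => (genMat F k).map (aeval w)) = M := by
    funext k i j
    simp [genMat, w]
  refine .of_comp (aeval w) ?_
  rwa [← pairInvariants_map, hspec]

theorem stmt_7_general (F : Type*) [Field F] :
    AlgebraicIndependent F
      (![Matrix.trace (genMat F 0),
         Matrix.trace (genMat F 1),
         Matrix.trace (genMat F 0 * genMat F 1),
         Matrix.det (genMat F 0),
         Matrix.det (genMat F 1)] : Fin 5 → MvPolynomial (Fin 2 × Fin 2 × Fin 2) F) := by
  let p : Polynomial (MvPolynomial (Fin 5) F) :=
    Polynomial.C 1 * Polynomial.X ^ 2 + Polynomial.C (-(X 1 - X 0)) * Polynomial.X +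
      Polynomial.C (-(X 0 * X 1 - X 3 - X 4 - X 2))
  let y : Fin 5 → AdjoinRoot p := fun i => AdjoinRoot.of p (X i)
  have hroot : AdjoinRoot.root p ^ 2 =
      (y 1 - y 0) * AdjoinRoot.root p + (y 0 * y 1 - y 3 - y 4 - y 2) := by
    have := AdjoinRoot.eval₂_root p
    simp only [p, Polynomial.eval₂_add, Polynomial.eval₂_mul, Polynomial.eval₂_C,
      Polynomial.eval₂_X_pow, Polynomial.eval₂_X] at this
    simp only [map_one, map_neg, map_sub, map_mul] at this
    linear_combination this
  apply algebraicIndependent_pairInvariants_genMat_of_specialization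
    (quadraticPair y (AdjoinRoot.root p))
  rw [pairInvariants_quadraticPair _ _ hroot]
  refine AdjoinRoot.algebraicIndependent_of_X ?_
  rw [Polynomial.degree_quadratic one_ne_zero]
  decide

/-- Over an infinite field of characteristic not two, the five invariants
`tr(X₁), tr(X₂), tr(X₁X₂), det(X₁), det(X₂)` of pairs of 2×2 matrices under simultaneous
conjugation by `GL(2)` are algebraically independent: they generate a polynomial ring in
five variables inside `F[H]`. -/
theorem stmt_7 (F : Type*) [Field F] [Infinite F] (hchar : ringChar F ≠ 2) :
    AlgebraicIndependent F
      (![Matrix.trace (genMat F 0),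
         Matrix.trace (genMat F 1),
         Matrix.trace (genMat F 0 * genMat F 1),
         Matrix.det (genMat F 0),
         Matrix.det (genMat F 1)] : Fin 5 → MvPolynomial (Fin 2 × Fin 2 × Fin 2) F) :=
  stmt_7_general F
end

section
/- Let Q be a quiver with set of vertices Q₀ and arrows Q₁, n a dimension vector, and suppose Q has no closed (oriented) paths. Then every GL(n)-invariant polynomial function on the representation space H(Q,n) = ⊕_{α∈Q₁} F^{n_{α'}×n_{α''}} is constant, i.e., F[H(Q,n)]^{GL(n)} = F. -/
/-!
Choose a height `d : V → ℕ` that strictly increases along every arrow, which exists because the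
quiver has no oriented cycles. The scalar one-parameter subgroup `t ↦ (t ^ d v • 1)_v` of `GL(n)`
multiplies the coordinates of an arrow `α` by `t ^ e α` with `e α = d (hd α) - d (tl α) > 0`. An
invariant `f` therefore satisfies `f (y) = f (t ^ e • y)` for all `t ≠ 0`; the right-hand side is a
polynomial in `t`, constant off `0`, hence also at `t = 0`, which gives `f (y) = f (0)`.
-/

open Matrix

namespace MvPolynomial

variable {R σ : Type*} [CommRing R]

theorem eval_aeval_C_mul_X_pow (f : MvPolynomial σ R) (e : σ → ℕ) (y : σ → R) (t : R) :
    (aeval (fun s => Polynomial.C (y s) * Polynomial.X ^ e s) f).eval t =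
      eval (fun s => t ^ e s * y s) f := by
  rw [← Polynomial.coe_aeval_eq_eval, comp_aeval_apply, aeval_eq_eval]
  congr 2 with s
  rw [map_mul, Polynomial.aeval_C, map_pow, Polynomial.aeval_X, Algebra.algebraMap_self_apply,
    mul_comm]

variable [IsDomain R] [Infinite R]

theorem eval_eq_eval_zero_of_eval_pow_mul_eq {f : MvPolynomial σ R} {e : σ → ℕ}
    (he : ∀ s, 0 < e s) (h : ∀ t ≠ 0, ∀ y, eval (fun s => t ^ e s * y s) f = eval y f)
    (y : σ → R) : eval y f = eval 0 f := by
  set q := aeval (fun s => Polynomial.C (y s) * Polynomial.X ^ e s) f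
  have hq : q = Polynomial.C (eval y f) := by
    refine Polynomial.eq_of_infinite_eval_eq _ _
      ((Set.finite_singleton (0 : R)).infinite_compl.mono fun t ht => ?_)
    rw [Set.mem_ofPred_eq, eval_aeval_C_mul_X_pow, Polynomial.eval_C, h t ht]
  have hq0 : q.eval 0 = _ := eval_aeval_C_mul_X_pow f e y 0
  simp only [hq, Polynomial.eval_C, zero_pow (he _).ne', zero_mul] at hq0
  exact hq0

theorem eq_C_constantCoeff_of_eval_pow_mul_eq {f : MvPolynomial σ R} {e : σ → ℕ}
    (he : ∀ s, 0 < e s) (h : ∀ t ≠ 0, ∀ y, eval (fun s => t ^ e s * y s) f = eval y f) :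
    f = C (constantCoeff f) :=
  funext fun y => by rw [eval_eq_eval_zero_of_eval_pow_mul_eq he h y, eval_zero, eval_C]

end MvPolynomial

section Quiver

variable {V A : Type*} (hd tl : A → V)

def ArrowRel (w v : V) : Prop := ∃ α, tl α = w ∧ hd α = v

theorem exists_path_of_transGen_arrowRel {w v : V} (h : Relation.TransGen (ArrowRel hd tl) w v) :
    ∃ (s : ℕ) (c : ℕ → A), 0 < s ∧ (∀ i, i + 1 < s → tl (c i) = hd (c (i + 1))) ∧
      hd (c 0) = v ∧ tl (c (s - 1)) = w := by
  induction h using Relation.TransGen.head_induction_on with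
  | single h =>
    obtain ⟨α, rfl, rfl⟩ := h
    exact ⟨1, fun _ => α, one_pos, by omega, rfl, rfl⟩
  | head hwu _ ih =>
    obtain ⟨α, rfl, rfl⟩ := hwu
    obtain ⟨s, c, hs, hchain, hhead, htail⟩ := ih
    -- append `α` at the end of the path
    refine ⟨s + 1, Function.update c s α, by omega, fun i hi => ?_, ?_, ?_⟩
    · rw [Function.update_of_ne (by omega)]
      rcases (show i + 1 < s ∨ i + 1 = s by omega) with hi | hi
      · rw [Function.update_of_ne (by omega), hchain i hi]
      · rw [hi, Function.update_self, ← htail, show i = s - 1 by omega]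
    · rw [Function.update_of_ne (by omega), hhead]
    · rw [Nat.add_sub_cancel, Function.update_self]

theorem not_transGen_arrowRel_self
    (hnoclosed : ∀ (s : ℕ) (c : ℕ → A), 0 < s →
      (∀ i, i + 1 < s → tl (c i) = hd (c (i + 1))) → tl (c (s - 1)) ≠ hd (c 0))
    (v : V) : ¬ Relation.TransGen (ArrowRel hd tl) v v := fun h => by
  obtain ⟨s, c, hs, hchain, hhead, htail⟩ := exists_path_of_transGen_arrowRel hd tl h
  exact hnoclosed s c hs hchain (htail.trans hhead.symm)

end Quiver

theorem Relation.exists_strictMono_nat_of_irrefl_transGen {α : Type*} [Finite α]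
    {r : α → α → Prop} (hirr : ∀ a, ¬ TransGen r a a) :
    ∃ d : α → ℕ, ∀ a b, r a b → d a < d b := by
  refine ⟨fun b => {a | TransGen r a b}.ncard, fun a b hab => Set.ncard_lt_ncard ?_⟩
  refine (Set.ssubset_iff_of_subset fun c hc => TransGen.tail hc hab).2 ⟨a, ?_, hirr a⟩
  exact TransGen.single hab

theorem Matrix.GeneralLinearGroup.scalar_mul_mul_inv_scalar_apply {R l m : Type*} [Semiring R]
    [Fintype l] [DecidableEq l] [Fintype m] [DecidableEq m] (u w : Rˣ) (M : Matrix l m R)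
    (i : l) (j : m) :
    ((scalar l u : Matrix l l R) * M * (((scalar m w)⁻¹ : GL m R) : Matrix m m R)) i j =
      u * M i j * ↑w⁻¹ := by
  rw [← map_inv, coe_scalar, coe_scalar, Matrix.scalar_apply, Matrix.scalar_apply]
  simp [diagonal_mul, mul_diagonal]

section Representations

variable {F : Type*} [Field F] {V A : Type*} (hd tl : A → V) (n : V → ℕ)

theorem eval_pow_mul_eq_of_invariant
    {f : MvPolynomial (Σ α : A, Fin (n (hd α)) × Fin (n (tl α))) F}
    (hinv : ∀ (g : ∀ v : V, GL (Fin (n v)) F)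
        (x : ∀ α : A, Matrix (Fin (n (hd α))) (Fin (n (tl α))) F),
      MvPolynomial.eval (fun s =>
          ((g (hd s.1) : Matrix (Fin (n (hd s.1))) (Fin (n (hd s.1))) F) * x s.1 *
            (((g (tl s.1))⁻¹ : GL (Fin (n (tl s.1))) F) :
              Matrix (Fin (n (tl s.1))) (Fin (n (tl s.1))) F)) s.2.1 s.2.2) f =
        MvPolynomial.eval (fun s => x s.1 s.2.1 s.2.2) f)
    {d : V → ℕ} (hmono : ∀ α, d (tl α) ≤ d (hd α)) {t : F} (ht : t ≠ 0)
    (y : (Σ α : A, Fin (n (hd α)) × Fin (n (tl α))) → F) :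
    MvPolynomial.eval (fun s => t ^ (d (hd s.1) - d (tl s.1)) * y s) f =
      MvPolynomial.eval y f := by
  refine Eq.trans ?_ (hinv (fun v => GeneralLinearGroup.scalar _ (Units.mk0 t ht ^ d v))
    (fun α => Matrix.of fun i j => y ⟨α, i, j⟩))
  congr 2
  funext ⟨α, i, j⟩
  rw [GeneralLinearGroup.scalar_mul_mul_inv_scalar_apply, pow_sub₀ t ht (hmono α)]
  simp [mul_right_comm]

end Representations

theorem stmt_18_general {F : Type*} [Field F] [Infinite F]
    {V A : Type*} [Fintype V]
    (hd tl : A → V) (n : V → ℕ)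
    (hnoclosed : ∀ (s : ℕ) (c : ℕ → A), 0 < s →
      (∀ i, i + 1 < s → tl (c i) = hd (c (i + 1))) → tl (c (s - 1)) ≠ hd (c 0))
    (f : MvPolynomial (Σ α : A, Fin (n (hd α)) × Fin (n (tl α))) F)
    (hinv : ∀ (g : ∀ v : V, GL (Fin (n v)) F)
        (x : ∀ α : A, Matrix (Fin (n (hd α))) (Fin (n (tl α))) F),
      MvPolynomial.eval (fun s =>
          ((g (hd s.1) : Matrix (Fin (n (hd s.1))) (Fin (n (hd s.1))) F) * x s.1 *
            (((g (tl s.1))⁻¹ : GL (Fin (n (tl s.1))) F) : Matrix (Fin (n (tl s.1))) (Fin (n (tl s.1))) F)) s.2.1 s.2.2) f =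
        MvPolynomial.eval (fun s => x s.1 s.2.1 s.2.2) f) :
    ∃ c : F, f = MvPolynomial.C c := by
  obtain ⟨d, hheight⟩ := Relation.exists_strictMono_nat_of_irrefl_transGen
    (not_transGen_arrowRel_self hd tl hnoclosed)
  have harrow (α : A) : d (tl α) < d (hd α) := hheight _ _ ⟨α, rfl, rfl⟩
  exact ⟨_, MvPolynomial.eq_C_constantCoeff_of_eval_pow_mul_eq
    (fun s => Nat.sub_pos_of_lt (harrow s.1))
    fun t ht => eval_pow_mul_eq_of_invariant hd tl n hinv (fun α => (harrow α).le) ht⟩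

/-- Let `Q` be a quiver (vertices `V`, arrows `A`, head `hd`, tail `tl`) with no closed
oriented paths, `n` a dimension vector, and `F` an infinite field. Then every
`GL(n)`-invariant polynomial function on the representation space
`H(Q,n) = ⊕_{α} F^{n(hd α) × n(tl α)}` is constant: `F[H(Q,n)]^{GL(n)} = F`. -/
theorem stmt_18 {F : Type*} [Field F] [Infinite F]
    {V A : Type*} [Fintype V] [Fintype A] [DecidableEq V]
    (hd tl : A → V) (n : V → ℕ)
    (hnoclosed : ∀ (s : ℕ) (c : ℕ → A), 0 < s →
      (∀ i, i + 1 < s → tl (c i) = hd (c (i + 1))) → tl (c (s - 1)) ≠ hd (c 0))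
    (f : MvPolynomial (Σ α : A, Fin (n (hd α)) × Fin (n (tl α))) F)
    (hinv : ∀ (g : ∀ v : V, GL (Fin (n v)) F)
        (x : ∀ α : A, Matrix (Fin (n (hd α))) (Fin (n (tl α))) F),
      MvPolynomial.eval (fun s =>
          ((g (hd s.1) : Matrix (Fin (n (hd s.1))) (Fin (n (hd s.1))) F) * x s.1 *
            (((g (tl s.1))⁻¹ : GL (Fin (n (tl s.1))) F) : Matrix (Fin (n (tl s.1))) (Fin (n (tl s.1))) F)) s.2.1 s.2.2) f =
        MvPolynomial.eval (fun s => x s.1 s.2.1 s.2.2) f) :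
    ∃ c : F, f = MvPolynomial.C c :=
  stmt_18_general hd tl n hnoclosed f hinv
end
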